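/- Consider the complete graph G' constructed from a bipartite DAG G by taking one vertex per edge of G, with edge weights: 1 if the two edges of G share a target, 2 if they share a source, 3 otherwise. Then there is a cost-preserving bijection between pebbling strategies of G in the (2,1)-I/O model with partial computations (viewed as orderings of edge eliminations) and Hamiltonian paths in G': the cost of a pebbling strategy equals the weight of the corresponding Hamiltonian path plus a fixed constant (the cost of handling the first edge), and in particular a minimum-weight Hamiltonian path in G' yields an optimal pebbling strategy for G. -/

import Mathlib

/-! The Red-Blue Pebble Game with partial computations, in the `(M,1)`-I/O model.
A pebble on a vertex means the corresponding word is in the cache; a blue pebble is a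
"dirty" partial result that must be stored (cost 1) before it can leave the cache. -/

inductive Pebble : Type
  | red
  | blue
deriving DecidableEq

/-- A configuration: the remaining (not yet computed) edges of the DAG, and the pebble
(if any) on each vertex. -/
structure Config (V : Type) where
  edges : Finset (V × V)
  peb : V → Option Pebble

variable {V : Type} [DecidableEq V] [Fintype V]

/-- The number of pebbles currently on the graph. -/
def pebCount (c : Config V) : ℕ :=
  (Finset.univ.filter fun v => (c.peb v).isSome).card

/-- One move of the game with at most `M` pebbles, together with its cost:
(R1) place a red pebble on an empty vertex, cost 1 (LOAD);
(R2) remove a red pebble, cost 0 (REMOVE), or change red to blue, cost 0;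
(R3) change a blue pebble to red, cost 1 (STORE);
(R4) if `u` is a leaf and both `u` and `v` are pebbled, delete the edge `(u,v)` for free,
     and the pebble on `v` becomes blue (partial COMPUTE);
(R5) at most `M` pebbles are on the graph at any time. -/
inductive Step (M : ℕ) : Config V → Config V → ℕ → Prop
  | load (c : Config V) (v : V) (h : c.peb v = none) (hM : pebCount c < M) :
      Step M c ⟨c.edges, Function.update c.peb v (some Pebble.red)⟩ 1
  | remove (c : Config V) (v : V) (h : c.peb v = some Pebble.red) :
      Step M c ⟨c.edges, Function.update c.peb v none⟩ 0
  | toBlue (c : Config V) (v : V) (h : c.peb v = some Pebble.red) :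
      Step M c ⟨c.edges, Function.update c.peb v (some Pebble.blue)⟩ 0
  | store (c : Config V) (v : V) (h : c.peb v = some Pebble.blue) :
      Step M c ⟨c.edges, Function.update c.peb v (some Pebble.red)⟩ 1
  | compute (c : Config V) (u v : V) (he : (u, v) ∈ c.edges)
      (hleaf : ∀ x, (x, u) ∉ c.edges)
      (hu : (c.peb u).isSome) (hv : (c.peb v).isSome) :
      Step M c ⟨c.edges.erase (u, v), Function.update c.peb v (some Pebble.blue)⟩ 0

/-- `Reach M c c' k`: configuration `c'` is reachable from `c` by a pebbling strategy of
total cost `k`. -/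
inductive Reach (M : ℕ) : Config V → Config V → ℕ → Prop
  | refl (c : Config V) : Reach M c c 0
  | tail {a b c : Config V} {k1 k2 : ℕ} :
      Reach M a b k1 → Step M b c k2 → Reach M a c (k1 + k2)

/-- The set of costs of pebbling strategies that, starting from the DAG with edge set `E`
and an empty cache, delete all edges and store all results (no dirty blue pebble
remains). -/
def Achievable (M : ℕ) (E : Finset (V × V)) : Set ℕ :=
  {k | ∃ c' : Config V, Reach M ⟨E, fun _ => none⟩ c' k ∧
    c'.edges = ∅ ∧ ∀ v, c'.peb v ≠ some Pebble.blue}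

/-- The weight function of the complete graph `G'` on the `m` edges of the bipartite DAG:
1 if the two edges share a target, 2 if they share a source, 3 otherwise. -/
def edgeW {N m : ℕ} (e : Fin m → Fin N × Fin N) : Fin m → Fin m → ℕ := fun i j =>
  if (e i).2 = (e j).2 then 1 else if (e i).1 = (e j).1 then 2 else 3

/-- The weight of the Hamiltonian path in `G'` given by the ordering `σ`. -/
def pathWeight {m : ℕ} (w : Fin m → Fin m → ℕ) (σ : Equiv.Perm (Fin m)) : ℕ :=
  ∑ i : Fin m, if h : (i : ℕ) + 1 < m then w (σ i) (σ ⟨(i : ℕ) + 1, h⟩) else 0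

/-!
After an edge `(u, v)` has been computed with two pebbles, the cache holds `u` and the dirty
result on `v`. Passing to the next edge `(u', v')` costs one load if `v = v'` (swap `u` for `u'`),
a store and a load if `u = u'` (swap `v` for `v'`), and a store and two loads otherwise. With the
two loads before the first compute and the store after the last one, every ordering of the edges
gives a strategy of cost `pathWeight + 3`.

Conversely, let `a` be the most recently computed edge. Every pebble away from the endpoints of `a`
was loaded after `a` was computed, and `a.2` is clean again only after a store. Counting these
already paid units as a potential, the cap of two pebbles forces the potential to be at least
`transferCost a b` when the next edge `b` is computed, so every strategy costs at least the weight
of the path listing its computes, plus `3`.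
-/

section ChainSum

variable {α : Type*} (w : α → α → ℕ)

def chainSum : List α → ℕ
  | a :: b :: l => w a b + chainSum (b :: l)
  | _ => 0

@[simp] lemma chainSum_singleton (a : α) : chainSum w [a] = 0 := rfl

@[simp] lemma chainSum_cons_cons (a b : α) (l : List α) :
    chainSum w (a :: b :: l) = w a b + chainSum w (b :: l) := rfl

lemma chainSum_append_pair (l : List α) (a b : α) :
    chainSum w (l ++ [a, b]) = chainSum w (l ++ [a]) + w a b := by
  induction l with
  | nil => simp
  | cons x l ih => cases l <;> simp_all [Nat.add_assoc]

lemma chainSum_reverse (hw : ∀ a b, w a b = w b a) (l : List α) :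
    chainSum w l.reverse = chainSum w l := by
  induction l with
  | nil => rfl
  | cons a l ih =>
    cases l with
    | nil => rfl
    | cons b l =>
      rw [List.reverse_cons, List.reverse_cons, List.append_assoc, List.singleton_append,
        chainSum_append_pair, ← List.reverse_cons, ih, chainSum_cons_cons, hw, Nat.add_comm]

lemma chainSum_map {β : Type*} (f : β → α) (l : List β) :
    chainSum w (l.map f) = chainSum (fun a b => w (f a) (f b)) l := by
  induction l with
  | nil => rfl
  | cons a l ih => cases l <;> simp_all

lemma sum_adjacent_eq_chainSum : ∀ {m : ℕ} (f : Fin m → α),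
    (∑ i : Fin m, if h : (i : ℕ) + 1 < m then w (f i) (f ⟨i + 1, h⟩) else 0) =
      chainSum w (List.ofFn f)
  | 0, _ => rfl
  | 1, _ => rfl
  | n + 2, f => by
    have ih := sum_adjacent_eq_chainSum (fun i : Fin (n + 1) => f i.succ)
    rw [List.ofFn_succ] at ih
    rw [Fin.sum_univ_succ, List.ofFn_succ, List.ofFn_succ, chainSum_cons_cons, ← ih]
    simp [Fin.succ]

end ChainSum

lemma pathWeight_eq_chainSum {m : ℕ} (w : Fin m → Fin m → ℕ) (σ : Equiv.Perm (Fin m)) :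
    pathWeight w σ = chainSum w (List.ofFn σ) :=
  sum_adjacent_eq_chainSum w σ

def transferCost {α : Type*} [DecidableEq α] (a b : α × α) : ℕ :=
  if a.2 = b.2 then 1 else if a.1 = b.1 then 2 else 3

lemma transferCost_comm {α : Type*} [DecidableEq α] (a b : α × α) :
    transferCost a b = transferCost b a := by
  simp only [transferCost, eq_comm]

def SourcesDisjointTargets {α : Type*} (E : Finset (α × α)) : Prop :=
  ∀ a ∈ E, ∀ b ∈ E, a.1 ≠ b.2

lemma SourcesDisjointTargets.notMem_into_source {α : Type*} {E S : Finset (α × α)}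
    (hE : SourcesDisjointTargets E) (hS : S ⊆ E) {a : α × α} (ha : a ∈ E) (x : α) :
    (x, a.1) ∉ S :=
  fun hx => hE a ha _ (hS hx) rfl

lemma Step.of_peb_eq {M k : ℕ} {c : Config V} {S : Finset (V × V)} {f g : V → Option Pebble}
    (h : Step M c ⟨S, f⟩ k) (hfg : f = g) : Step M c ⟨S, g⟩ k :=
  hfg ▸ h

lemma Step.reach {M : ℕ} {a b : Config V} {k : ℕ} (h : Step M a b k) : Reach M a b k :=
  Nat.zero_add k ▸ (Reach.refl a).tail h

lemma Reach.trans {M : ℕ} {a b c : Config V} {k₁ k₂ : ℕ}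
    (h₁ : Reach M a b k₁) (h₂ : Reach M b c k₂) : Reach M a c (k₁ + k₂) := by
  induction h₂ with
  | refl => exact h₁
  | tail _ s ih => exact Nat.add_assoc .. ▸ ih.tail s

lemma pebCount_empty {α : Type} [Fintype α] (S : Finset (α × α)) :
    pebCount (⟨S, fun _ => none⟩ : Config α) = 0 := by
  simp [pebCount]

lemma card_le_pebCount {α : Type} [Fintype α] {c : Config α} {T : Finset α}
    (hT : ∀ x ∈ T, (c.peb x).isSome) : T.card ≤ pebCount c :=
  Finset.card_le_card fun x hx => by simpa using hT x hx

section Strategy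

def cacheOne {α : Type*} [DecidableEq α] (u : α) (p : Pebble) : α → Option Pebble :=
  Function.update (fun _ => none) u (some p)

def cacheTwo {α : Type*} [DecidableEq α] (u v : α) (p : Pebble) : α → Option Pebble :=
  Function.update (cacheOne u .red) v (some p)

variable {M : ℕ} {S E : Finset (V × V)} {u v : V}

lemma pebCount_cacheOne (S : Finset (V × V)) (u : V) (p : Pebble) :
    pebCount (⟨S, cacheOne u p⟩ : Config V) = 1 := by
  rw [cacheOne, pebCount, Finset.card_eq_one]
  exact ⟨u, by ext x; by_cases hx : x = u <;> simp [hx]⟩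

lemma reach_load_compute (hM : 2 ≤ M) (huv : u ≠ v) (he : (u, v) ∈ S)
    (hleaf : ∀ x, (x, u) ∉ S) :
    Reach M ⟨S, cacheOne u .red⟩ ⟨S.erase (u, v), cacheTwo u v .blue⟩ 1 :=
  (Step.load (M := M) ⟨S, cacheOne u .red⟩ v (by simp [cacheOne, huv.symm])
      (by rw [pebCount_cacheOne]; omega)).reach.trans
    ((Step.compute ⟨S, cacheTwo u v .red⟩ u v he hleaf (by simp [cacheTwo, cacheOne, huv])
      (by simp [cacheTwo])).of_peb_eq (Function.update_idem ..)).reach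

lemma reach_start (hM : 2 ≤ M) (huv : u ≠ v) (he : (u, v) ∈ S)
    (hleaf : ∀ x, (x, u) ∉ S) :
    Reach M ⟨S, fun _ => none⟩ ⟨S.erase (u, v), cacheTwo u v .blue⟩ 2 :=
  (Step.load (M := M) ⟨S, fun _ => none⟩ u rfl (by rw [pebCount_empty]; omega)).reach.trans
    (reach_load_compute hM huv he hleaf)

lemma reach_store_remove (huv : u ≠ v) :
    Reach M ⟨S, cacheTwo u v .blue⟩ ⟨S, cacheOne u .red⟩ 1 :=
  ((Step.store ⟨S, cacheTwo u v .blue⟩ v (by simp [cacheTwo])).of_peb_eq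
      (Function.update_idem ..)).reach.trans
    ((Step.remove ⟨S, cacheTwo u v .red⟩ v (by simp [cacheTwo])).of_peb_eq
      (by rw [cacheTwo, Function.update_idem, Function.update_eq_self_iff]
          simp [cacheOne, huv.symm])).reach

lemma reach_remove : Reach M ⟨S, cacheOne u .red⟩ ⟨S, fun _ => none⟩ 0 :=
  ((Step.remove ⟨S, cacheOne u .red⟩ u (by simp [cacheOne])).of_peb_eq
    (by rw [cacheOne, Function.update_idem, Function.update_eq_self_iff])).reach

lemma reach_remove_load_compute (hM : 2 ≤ M) {u' : V} (huv : u ≠ v) (hu'v : u' ≠ v)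
    (he : (u', v) ∈ S) (hleaf : ∀ x, (x, u') ∉ S) :
    Reach M ⟨S, cacheTwo u v .blue⟩ ⟨S.erase (u', v), cacheTwo u' v .blue⟩ 1 :=
  (((Step.remove ⟨S, cacheTwo u v .blue⟩ u (by simp [cacheTwo, cacheOne, huv])).of_peb_eq
      (by rw [cacheTwo, cacheOne, Function.update_comm huv.symm, Function.update_idem,
        Function.update_eq_self_iff.mpr rfl]; rfl)).reach.trans
    ((Step.load (M := M) ⟨S, cacheOne v .blue⟩ u' (by simp [cacheOne, hu'v])
        (by rw [pebCount_cacheOne]; omega)).of_peb_eq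
      (Function.update_comm hu'v.symm ..)).reach).trans
  ((Step.compute ⟨S, cacheTwo u' v .blue⟩ u' v he hleaf (by simp [cacheTwo, cacheOne, hu'v])
      (by simp [cacheTwo])).of_peb_eq (Function.update_idem ..)).reach

lemma reach_transfer (hM : 2 ≤ M) (hE : SourcesDisjointTargets E) (hS : S ⊆ E)
    {a b : V × V} (ha : a ∈ E) (hb : b ∈ S) :
    Reach M ⟨S, cacheTwo a.1 a.2 .blue⟩ ⟨S.erase b, cacheTwo b.1 b.2 .blue⟩
      (transferCost a b) := by
  have hleaf := hE.notMem_into_source hS (hS hb)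
  obtain ⟨u, v⟩ := a
  obtain ⟨u', v'⟩ := b
  have huv : u ≠ v := hE _ ha _ ha
  have hu'v' : u' ≠ v' := hE _ (hS hb) _ (hS hb)
  unfold transferCost
  split_ifs with hv hu
  · obtain rfl : v = v' := hv
    exact reach_remove_load_compute hM huv hu'v' hb hleaf
  · obtain rfl : u = u' := hu
    exact (reach_store_remove huv).trans (reach_load_compute hM hu'v' hb hleaf)
  · exact ((reach_store_remove huv).trans reach_remove).trans (reach_start hM hu'v' hb hleaf)

lemma reach_chain (hM : 2 ≤ M) (hE : SourcesDisjointTargets E) (a : V × V) (l : List (V × V))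
    (S : Finset (V × V)) (hS : S ⊆ E) (ha : a ∈ E) (hlS : ∀ b ∈ l, b ∈ S)
    (hl : l.Nodup) :
    ∃ b : V × V, Reach M ⟨S, cacheTwo a.1 a.2 .blue⟩
      ⟨S \ l.toFinset, cacheTwo b.1 b.2 .blue⟩ (chainSum transferCost (a :: l)) := by
  induction l generalizing a S with
  | nil => exact ⟨a, by simpa using Reach.refl _⟩
  | cons b l ih =>
    obtain ⟨hbl, hl⟩ := List.nodup_cons.mp hl
    have hb : b ∈ S := hlS b List.mem_cons_self
    obtain ⟨d, hd⟩ := ih b (S.erase b) ((S.erase_subset b).trans hS) (hS hb)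
      (fun c hc => Finset.mem_erase.mpr ⟨ne_of_mem_of_not_mem hc hbl, hlS c (by simp [hc])⟩) hl
    refine ⟨d, ?_⟩
    rw [List.toFinset_cons, Finset.sdiff_insert, ← Finset.erase_sdiff_comm]
    exact (reach_transfer hM hE hS ha hb).trans hd

lemma mem_achievable_of_chain (hM : 2 ≤ M) (hE : SourcesDisjointTargets E)
    {L : List (V × V)} (hL : L.Nodup) (hLE : L.toFinset = E) (hne : L ≠ []) :
    chainSum transferCost L + 3 ∈ Achievable M E := by
  obtain ⟨a, l, rfl⟩ := List.exists_cons_of_ne_nil hne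
  obtain ⟨hal, hl⟩ := List.nodup_cons.mp hL
  have ha : a ∈ E := hLE ▸ by simp
  obtain ⟨b, hb⟩ := reach_chain hM hE a l (E.erase a) (E.erase_subset a) ha
    (fun c hc => Finset.mem_erase.mpr ⟨ne_of_mem_of_not_mem hc hal, hLE ▸ by simp [hc]⟩) hl
  have hdone : E.erase a \ l.toFinset = ∅ := by
    rw [Finset.erase_sdiff_comm, ← Finset.sdiff_insert, ← List.toFinset_cons, hLE,
      Finset.sdiff_self]
  rw [hdone] at hb
  have hstore := Step.store (M := M) ⟨∅, cacheTwo b.1 b.2 .blue⟩ b.2 (by simp [cacheTwo])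
  refine ⟨⟨∅, cacheTwo b.1 b.2 .red⟩, ?_, rfl, fun x => ?_⟩
  · have := ((reach_start hM (hE a ha a ha) ha (hE.notMem_into_source le_rfl ha)).trans
      hb).trans (hstore.of_peb_eq (Function.update_idem ..)).reach
    rwa [Nat.add_comm 2, Nat.add_assoc] at this
  · simp only [cacheTwo, cacheOne, Function.update_apply]
    split_ifs <;> simp

end Strategy

section LowerBound

lemma Finset.sum_le_sum_add_of_eq_of_ne {ι : Type*} [Fintype ι] [DecidableEq ι]
    {g g' : ι → ℕ} (i : ι) {k : ℕ} (hne : ∀ j ≠ i, g' j = g j) (hi : g' i ≤ g i + k) :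
    ∑ j, g' j ≤ ∑ j, g j + k := by
  have h' := Finset.add_sum_erase Finset.univ g' (Finset.mem_univ i)
  have h := Finset.add_sum_erase Finset.univ g (Finset.mem_univ i)
  have hrest : ∑ j ∈ Finset.univ.erase i, g' j = ∑ j ∈ Finset.univ.erase i, g j :=
    Finset.sum_congr rfl fun j hj => hne j (Finset.ne_of_mem_erase hj)
  omega

/-- The first argument is the most recently computed edge (`none` before the first compute). -/
def vertexPotential {α : Type*} [DecidableEq α] :
    Option (α × α) → α → Option Pebble → ℕ
  | none, _, o => if o.isSome then 1 else 0
  | some a, x, o =>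
    if x = a.1 then 0 else if x = a.2 then (if o = some .blue then 0 else 1)
    else if o.isSome then 1 else 0

lemma vertexPotential_le_one {α : Type*} [DecidableEq α] (h : Option (α × α)) (x : α)
    (o : Option Pebble) : vertexPotential h x o ≤ 1 := by
  cases h <;> simp only [vertexPotential] <;> split_ifs <;> omega

lemma vertexPotential_le_red {α : Type*} [DecidableEq α] (h : Option (α × α)) (x : α)
    (o : Option Pebble) : vertexPotential h x o ≤ vertexPotential h x (some .red) := by
  cases h <;> simp only [vertexPotential] <;> split_ifs <;> simp_all

lemma sum_vertexPotential_update_le (h : Option (V × V)) (f : V → Option Pebble) (v : V)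
    (o : Option Pebble) {k : ℕ} (hv : vertexPotential h v o ≤ vertexPotential h v (f v) + k) :
    ∑ x, vertexPotential h x (Function.update f v o x) ≤ ∑ x, vertexPotential h x (f x) + k :=
  Finset.sum_le_sum_add_of_eq_of_ne v (fun x hx => by rw [Function.update_of_ne hx])
    (by rwa [Function.update_self])

lemma pebCount_eq_sum (c : Config V) : pebCount c = ∑ x, vertexPotential none x (c.peb x) := by
  rw [pebCount, Finset.card_filter]
  rfl

lemma pebCount_update_le (S : Finset (V × V)) (c : Config V) (v : V) (o : Option Pebble) :
    pebCount (⟨S, Function.update c.peb v o⟩ : Config V) ≤ pebCount c + 1 := by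
  simp only [pebCount_eq_sum]
  exact sum_vertexPotential_update_le none c.peb v o
    ((vertexPotential_le_one _ _ _).trans (Nat.le_add_left _ _))

lemma pebCount_update_le_of_isSome (S : Finset (V × V)) {c : Config V} {v : V}
    (hv : (c.peb v).isSome) (o : Option Pebble) :
    pebCount (⟨S, Function.update c.peb v o⟩ : Config V) ≤ pebCount c := by
  simp only [pebCount_eq_sum]
  exact sum_vertexPotential_update_le none c.peb v o (k := 0)
    ((vertexPotential_le_one _ _ _).trans (by simp [vertexPotential, hv]))

lemma pebCount_le_of_reach {M k : ℕ} {c₀ c : Config V} (h : Reach M c₀ c k)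
    (h₀ : pebCount c₀ ≤ M) : pebCount c ≤ M := by
  induction h with
  | refl => exact h₀
  | tail _ s ih =>
    cases s with
    | load v _ hlt => exact (pebCount_update_le _ _ v _).trans hlt
    | remove v hv => exact (pebCount_update_le_of_isSome _ (by simp [hv]) _).trans ih
    | toBlue v hv => exact (pebCount_update_le_of_isSome _ (by simp [hv]) _).trans ih
    | store v hv => exact (pebCount_update_le_of_isSome _ (by simp [hv]) _).trans ih
    | compute u v _ _ _ hv => exact (pebCount_update_le_of_isSome _ hv _).trans ih

lemma eq_none_of_pebCount_le_two {c : Config V} (hpc : pebCount c ≤ 2) {u v : V} (huv : u ≠ v)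
    (hu : (c.peb u).isSome) (hv : (c.peb v).isSome) {x : V} (hxu : x ≠ u) (hxv : x ≠ v) :
    c.peb x = none := by
  by_contra hx
  have := card_le_pebCount (c := c) (T := {x, u, v}) (by
    simp only [Finset.mem_insert, Finset.mem_singleton]
    rintro y (rfl | rfl | rfl) <;> simp_all [Option.isSome_iff_ne_none])
  rw [Finset.card_insert_of_notMem (by simp [hxu, hxv]), Finset.card_pair huv] at this
  omega

def potential : List (V × V) → Config V → ℕ
  | [], c => pebCount c
  | a :: l, c => 2 + chainSum transferCost (a :: l) + ∑ x, vertexPotential (some a) x (c.peb x)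

lemma potential_update_le (L : List (V × V)) (S : Finset (V × V)) (c : Config V) (v : V)
    (o : Option Pebble) {k : ℕ}
    (hv : ∀ h, vertexPotential h v o ≤ vertexPotential h v (c.peb v) + k) :
    potential L ⟨S, Function.update c.peb v o⟩ ≤ potential L c + k := by
  cases L with
  | nil =>
    simp only [potential, pebCount_eq_sum]
    exact sum_vertexPotential_update_le none c.peb v o (hv none)
  | cons a l =>
    have := sum_vertexPotential_update_le (some a) c.peb v o (hv (some a))
    simp only [potential]
    omega

lemma transferCost_le_sum_vertexPotential {f : V → Option Pebble} {u v : V} {a : V × V}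
    (huv : u ≠ v) (ha : a.1 ≠ a.2) (hua : u ≠ a.2) (hva : v ≠ a.1) (hne : (u, v) ≠ a)
    (hu : (f u).isSome) (hv : (f v).isSome) (hothers : ∀ x, x ≠ u → x ≠ v → f x = none) :
    transferCost (u, v) a ≤ ∑ x, vertexPotential (some a) x (f x) := by
  set ψ := fun x => vertexPotential (some a) x (f x) with hψ
  have hψu : ψ u = if u = a.1 then 0 else 1 := by
    simp only [hψ, vertexPotential]
    split_ifs <;> simp_all
  by_cases hva₂ : v = a.2
  · have hua₁ : u ≠ a.1 := fun h => hne (Prod.ext h hva₂)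
    rw [transferCost, if_pos hva₂]
    calc 1 = ψ u := by rw [hψu, if_neg hua₁]
      _ ≤ ∑ x, ψ x := Finset.single_le_sum (fun _ _ => Nat.zero_le _) (Finset.mem_univ u)
  · have hψv : ψ v = 1 := by simp [hψ, vertexPotential, hva, hva₂, hv]
    have hψa : ψ a.2 = 1 := by
      simp [hψ, vertexPotential, ha.symm, hothers a.2 (Ne.symm hua) (Ne.symm hva₂)]
    have hsub := Finset.sum_le_sum_of_subset (f := ψ) (Finset.subset_univ {u, v, a.2})
    rw [Finset.sum_insert (by simp [huv, hua]), Finset.sum_pair hva₂, hψu, hψv, hψa] at hsub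
    rw [transferCost, if_neg hva₂]
    split_ifs at hsub ⊢ <;> omega

variable {E : Finset (V × V)}

lemma potential_compute_le (hE : SourcesDisjointTargets E) {c : Config V} {L : List (V × V)}
    (hLE : L.toFinset ⊆ E) (hpc : pebCount c ≤ 2) {u v : V} (he : (u, v) ∈ E)
    (hL : (u, v) ∉ L)
    (hu : (c.peb u).isSome) (hv : (c.peb v).isSome) (S : Finset (V × V)) :
    potential ((u, v) :: L) ⟨S, Function.update c.peb v (some .blue)⟩ ≤ potential L c := by
  have huv : u ≠ v := hE _ he _ he
  have hothers {x : V} := eq_none_of_pebCount_le_two hpc huv hu hv (x := x)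
  have hzero :
      ∑ x, vertexPotential (some (u, v)) x (Function.update c.peb v (some .blue) x) = 0 :=
    Finset.sum_eq_zero fun x _ => by
      by_cases hxu : x = u
      · simp [vertexPotential, hxu]
      by_cases hxv : x = v
      · simp [vertexPotential, hxv, huv.symm]
      simp [vertexPotential, hxu, hxv, hothers hxu hxv]
  cases L with
  | nil =>
    have := card_le_pebCount (c := c) (T := {u, v}) (by simp [hu, hv])
    rw [Finset.card_pair huv] at this
    simp only [potential, hzero, chainSum_singleton]
    omega
  | cons a l =>
    have ha : a ∈ E := hLE (by simp)
    have := transferCost_le_sum_vertexPotential huv (hE a ha a ha) (hE _ he a ha)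
      (Ne.symm (hE a ha _ he)) (fun h => hL (h ▸ List.mem_cons_self)) hu hv (fun _ => hothers)
    simp only [potential, hzero, chainSum_cons_cons]
    omega

/-- `L` lists the computed edges, the most recent first. -/
def CostInvariant (E : Finset (V × V)) (c : Config V) (k : ℕ) : Prop :=
  ∃ L : List (V × V),
    L.Nodup ∧ L.toFinset ⊆ E ∧ c.edges = E \ L.toFinset ∧ potential L c ≤ k

lemma CostInvariant.step (hE : SourcesDisjointTargets E) {b c : Config V} {k₁ k₂ : ℕ}
    (hb : CostInvariant E b k₁) (hpc : pebCount b ≤ 2) (hs : Step 2 b c k₂) :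
    CostInvariant E c (k₁ + k₂) := by
  obtain ⟨L, hnd, hLE, hedges, hpot⟩ := hb
  have hred {v o} (hv : b.peb v = some .red) (h : Option (V × V)) :
      vertexPotential h v o ≤ vertexPotential h v (b.peb v) + 0 :=
    hv ▸ vertexPotential_le_red h v o
  have hpaid {v o} (h : Option (V × V)) :
      vertexPotential h v o ≤ vertexPotential h v (b.peb v) + 1 :=
    (vertexPotential_le_one h v o).trans (Nat.le_add_left _ _)
  have hkeep {v : V} {o : Option Pebble} {k : ℕ}
      (hv : ∀ h, vertexPotential h v o ≤ vertexPotential h v (b.peb v) + k) :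
      CostInvariant E ⟨b.edges, Function.update b.peb v o⟩ (k₁ + k) :=
    ⟨L, hnd, hLE, hedges,
      (potential_update_le L _ b v o hv).trans (Nat.add_le_add_right hpot k)⟩
  cases hs with
  | load v _ _ => exact hkeep hpaid
  | remove v hv => exact hkeep (hred hv)
  | toBlue v hv => exact hkeep (hred hv)
  | store v _ => exact hkeep hpaid
  | compute u v he _ hu hv =>
    rw [hedges, Finset.mem_sdiff, List.mem_toFinset] at he
    refine ⟨(u, v) :: L, List.nodup_cons.mpr ⟨he.2, hnd⟩, ?_, ?_,
      (potential_compute_le hE hLE hpc he.1 he.2 hu hv _).trans (Nat.le_add_right_of_le hpot)⟩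
    · rw [List.toFinset_cons]
      exact Finset.insert_subset he.1 hLE
    · rw [hedges, List.toFinset_cons, Finset.sdiff_insert]

lemma costInvariant_of_reach (hE : SourcesDisjointTargets E) {c : Config V} {k : ℕ}
    (h : Reach 2 ⟨E, fun _ => none⟩ c k) : CostInvariant E c k := by
  induction h with
  | refl => exact ⟨[], List.nodup_nil, by simp, by simp, by simp [potential, pebCount_empty]⟩
  | tail r s ih => exact ih.step hE (pebCount_le_of_reach r (by simp [pebCount_empty])) s

lemma exists_chain_of_mem_achievable (hE : SourcesDisjointTargets E) (hne : E.Nonempty) {k : ℕ}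
    (hk : k ∈ Achievable 2 E) :
    ∃ L : List (V × V), L.Nodup ∧ L.toFinset = E ∧ chainSum transferCost L + 3 ≤ k := by
  obtain ⟨c, hr, hdone, hclean⟩ := hk
  obtain ⟨L, hnd, hLE, hedges, hpot⟩ := costInvariant_of_reach hE hr
  have hLE' : L.toFinset = E :=
    hLE.antisymm (Finset.sdiff_eq_empty_iff_subset.mp (hedges ▸ hdone))
  refine ⟨L, hnd, hLE', ?_⟩
  obtain ⟨a, l, rfl⟩ := List.exists_cons_of_ne_nil (l := L)
    (by rintro rfl; simp [← hLE'] at hne)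
  have ha : a ∈ E := hLE' ▸ by simp
  have hstored : vertexPotential (some a) a.2 (c.peb a.2) = 1 := by
    simp [vertexPotential, (hE a ha a ha).symm, hclean]
  have := Finset.single_le_sum (f := fun x => vertexPotential (some a) x (c.peb x))
    (fun _ _ => Nat.zero_le _) (Finset.mem_univ a.2)
  simp only [potential] at hpot
  omega

end LowerBound

lemma exists_perm_ofFn_eq {α : Type*} [DecidableEq α] {m : ℕ} {e : Fin m → α}
    (hinj : Function.Injective e) {L : List α} (hL : L.Nodup)
    (hLE : L.toFinset = Finset.univ.image e) :
    ∃ σ : Equiv.Perm (Fin m), List.ofFn (e ∘ σ) = L := by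
  obtain ⟨L, rfl⟩ : L ∈ Set.range (List.map e) := by
    rw [Set.range_list_map]
    intro x hx
    have : x ∈ Finset.univ.image e := hLE ▸ List.mem_toFinset.mpr hx
    simpa using this
  have hnd : L.Nodup := (List.nodup_map_iff hinj).mp hL
  have hall (i : Fin m) : i ∈ L := by
    rw [← List.mem_map_of_injective hinj, ← List.mem_toFinset, hLE]
    exact Finset.mem_image_of_mem e (Finset.mem_univ i)
  have hlen : L.length = m := by
    simpa using (List.toFinset_card_of_nodup hnd).symm.trans
      (congrArg Finset.card (Finset.eq_univ_of_forall (fun i => List.mem_toFinset.mpr (hall i))))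
  refine ⟨(finCongr hlen.symm).trans (hnd.getEquivOfForallMemList L hall), ?_⟩
  apply List.ext_getElem (by simp [hlen])
  intro i h₁ h₂
  simp

/-- let `G` be a bipartite DAG with `m ≥ 1` distinct edges `e 0, ..., e (m-1)`
(no source is a target), and let `G'` be the complete graph on the edges of `G` with
weights 1/2/3 as in `edgeW`.  Pebbling strategies of `G` in the `(2,1)`-I/O model
correspond to Hamiltonian paths of `G'` (orderings `σ` of the edges), preserving cost up
to the fixed constant 3 for handling the first edge: every ordering `σ` yields a strategy
of cost `pathWeight σ + 3`, and every strategy is at least as expensive as the one coming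
from some ordering; in particular a minimum-weight Hamiltonian path yields an optimal
pebbling strategy. -/
theorem stmt10 (N m : ℕ) (hm : 1 ≤ m) (e : Fin m → Fin N × Fin N)
    (hinj : Function.Injective e)
    (hbip : ∀ i j : Fin m, (e i).1 ≠ (e j).2) :
    (∀ σ : Equiv.Perm (Fin m),
        pathWeight (edgeW e) σ + 3 ∈ Achievable 2 (Finset.univ.image e)) ∧
    (∀ k ∈ Achievable 2 (Finset.univ.image e),
        ∃ σ : Equiv.Perm (Fin m), pathWeight (edgeW e) σ + 3 ≤ k) := by
  have hE : SourcesDisjointTargets (Finset.univ.image e) := by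
    simp only [SourcesDisjointTargets, Finset.mem_image, Finset.mem_univ, true_and]
    rintro _ ⟨i, rfl⟩ _ ⟨j, rfl⟩
    exact hbip i j
  have hweight (σ : Equiv.Perm (Fin m)) :
      pathWeight (edgeW e) σ = chainSum transferCost (List.ofFn (e ∘ σ)) := by
    rw [pathWeight_eq_chainSum, ← List.map_ofFn, chainSum_map]
    rfl
  refine ⟨fun σ => ?_, fun k hk => ?_⟩
  · rw [hweight]
    refine mem_achievable_of_chain le_rfl hE (List.nodup_ofFn.mpr (hinj.comp σ.injective)) ?_
      (by rw [Ne, List.ofFn_eq_nil_iff]; omega)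
    ext x
    simp only [List.mem_toFinset, List.mem_ofFn, Finset.mem_image, Finset.mem_univ, true_and]
    exact (σ.surjective.exists (p := fun i => e i = x)).symm
  · have hne : (Finset.univ.image e).Nonempty :=
      (Finset.univ_nonempty_iff.mpr ⟨⟨0, hm⟩⟩).image e
    obtain ⟨L, hL, hLE, hcost⟩ := exists_chain_of_mem_achievable hE hne hk
    obtain ⟨σ, hσ⟩ := exists_perm_ofFn_eq hinj (List.nodup_reverse.mpr hL)
      (by rwa [List.toFinset_reverse])
    exact ⟨σ, by rwa [hweight, hσ, chainSum_reverse _ transferCost_comm]⟩
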